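/- (Galerkin condition for Gl-QFOM.) Let A ∈ ℍ^{n×n}, B, X₀ ∈ ℍ^{n×m}, R₀ := B − A X₀, β := ‖R₀‖ > 0, V₁ := R₀ β^{-1}, and assume the Arnoldi hypotheses through step k; extend h_{i,j} by h_{i,j} := 0 for i > j+1. Then for every y ∈ ℍ^k the following are equivalent: (a) tr(V_i^* (R₀ − A(Σ_{j=1}^k V_j y_j))) = 0 for all i = 1, …, k; (b) Σ_{j=1}^k h_{i,j} y_j = β δ_{i1} for all i = 1, …, k, i.e. H_k y = β e₁ where H_k = (h_{i,j})_{1≤i,j≤k} and e₁ = (1,0,…,0)^T ∈ ℝ^k. -/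

import Mathlib

open Matrix Quaternion

noncomputable section

/-- Entrywise right scalar multiple of a quaternion matrix. -/
def qsmul {n m : ℕ} (X : Matrix (Fin n) (Fin m) ℍ[ℝ]) (a : ℍ[ℝ]) :
    Matrix (Fin n) (Fin m) ℍ[ℝ] := fun i j => X i j * a

/-- Frobenius norm of a quaternion matrix: `‖X‖ = (Re tr(X^* X))^{1/2}`. -/
def qnorm {n m : ℕ} (X : Matrix (Fin n) (Fin m) ℍ[ℝ]) : ℝ :=
  Real.sqrt (Matrix.trace (Xᴴ * X)).re

/-- The Arnoldi hypotheses through step `k`. -/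
structure ArnoldiData (n m k : ℕ) (A : Matrix (Fin n) (Fin n) ℍ[ℝ])
    (V : ℕ → Matrix (Fin n) (Fin m) ℍ[ℝ]) (h : ℕ → ℕ → ℍ[ℝ]) : Prop where
  normV1 : qnorm (V 1) = 1
  hdef : ∀ j ∈ Finset.Icc 1 k, ∀ i ∈ Finset.Icc 1 j,
      h i j = Matrix.trace ((V i)ᴴ * (A * V j))
  hsub : ∀ j ∈ Finset.Icc 1 k,
      h (j+1) j = (qnorm (A * V j - ∑ i ∈ Finset.Icc 1 j, qsmul (V i) (h i j)) : ℍ[ℝ])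
  hsub_ne : ∀ j ∈ Finset.Icc 1 k, h (j+1) j ≠ 0
  vdef : ∀ j ∈ Finset.Icc 1 k,
      V (j+1) = qsmul (A * V j - ∑ i ∈ Finset.Icc 1 j, qsmul (V i) (h i j)) (h (j+1) j)⁻¹

/-! The Arnoldi blocks `V₁, …, V_{k+1}` are orthonormal for the quaternion-valued inner product
`⟨X, Y⟩ = tr(Y^* X)`, and `A V_j = Σ_{i ≤ j+1} V_i h_{i,j}`. Hence
`tr(V_i^* A V_j) = h_{i,j}` for `i, j ≤ k`, and since `R₀ = V₁ β`, also `tr(V_i^* R₀) = β δ_{i1}`.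
Expanding the residual then gives
`tr(V_i^* (R₀ − A Σ_j V_j y_j)) = β δ_{i1} − Σ_j h_{i,j} y_j`, so the two conditions agree. -/

section qsmul

variable {n m : ℕ}

lemma qsmul_qsmul (X : Matrix (Fin n) (Fin m) ℍ[ℝ]) (a b : ℍ[ℝ]) :
    qsmul (qsmul X a) b = qsmul X (a * b) := by
  funext i j; simp [qsmul, mul_assoc]

lemma qsmul_one (X : Matrix (Fin n) (Fin m) ℍ[ℝ]) : qsmul X 1 = X := by
  funext i j; simp [qsmul]

lemma qsmul_mul_inv_cancel (X : Matrix (Fin n) (Fin m) ℍ[ℝ]) {a : ℍ[ℝ]} (ha : a ≠ 0) :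
    qsmul (qsmul X a⁻¹) a = X := by
  rw [qsmul_qsmul, inv_mul_cancel₀ ha, qsmul_one]

lemma mul_qsmul (A : Matrix (Fin n) (Fin n) ℍ[ℝ]) (X : Matrix (Fin n) (Fin m) ℍ[ℝ])
    (a : ℍ[ℝ]) : A * qsmul X a = qsmul (A * X) a := by
  funext i j; simp [qsmul, Matrix.mul_apply, Finset.sum_mul, mul_assoc]

lemma trace_conjTranspose_mul_qsmul (X Y : Matrix (Fin n) (Fin m) ℍ[ℝ]) (a : ℍ[ℝ]) :
    trace (Xᴴ * qsmul Y a) = trace (Xᴴ * Y) * a := by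
  simp [Matrix.trace, Matrix.mul_apply, qsmul, Finset.sum_mul, mul_assoc]

lemma trace_qsmul_conjTranspose_mul (X Y : Matrix (Fin n) (Fin m) ℍ[ℝ]) (a : ℍ[ℝ]) :
    trace ((qsmul X a)ᴴ * Y) = star a * trace (Xᴴ * Y) := by
  simp [Matrix.trace, Matrix.mul_apply, qsmul, Finset.mul_sum, mul_assoc]

lemma trace_conjTranspose_mul_comm (X Y : Matrix (Fin n) (Fin m) ℍ[ℝ]) :
    trace (Yᴴ * X) = star (trace (Xᴴ * Y)) := by
  rw [← trace_conjTranspose, conjTranspose_mul, conjTranspose_conjTranspose]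

lemma trace_conjTranspose_mul_self (X : Matrix (Fin n) (Fin m) ℍ[ℝ]) :
    trace (Xᴴ * X) = ((qnorm X ^ 2 : ℝ) : ℍ[ℝ]) := by
  have hsum : trace (Xᴴ * X) = ((∑ i, ∑ l, normSq (X l i) : ℝ) : ℍ[ℝ]) := by
    simp only [Matrix.trace, Matrix.diag, Matrix.mul_apply, conjTranspose_apply,
      star_mul_self, ← algebraMap_def, map_sum]
  have hnonneg : 0 ≤ (∑ i, ∑ l, normSq (X l i) : ℝ) :=
    Finset.sum_nonneg fun _ _ => Finset.sum_nonneg fun _ _ => normSq_nonneg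
  rw [qnorm, hsum, re_coe, Real.sq_sqrt hnonneg]

lemma trace_normalize_conjTranspose_mul_self (W : Matrix (Fin n) (Fin m) ℍ[ℝ]) {r : ℍ[ℝ]}
    (hr : r = (qnorm W : ℍ[ℝ])) (hr0 : r ≠ 0) :
    trace ((qsmul W r⁻¹)ᴴ * qsmul W r⁻¹) = 1 := by
  have hW : qnorm W ≠ 0 := fun h0 => hr0 (by rw [hr, h0, coe_zero])
  rw [trace_qsmul_conjTranspose_mul, trace_conjTranspose_mul_qsmul,
    trace_conjTranspose_mul_self, hr, ← coe_inv, star_coe, ← coe_mul, ← coe_mul]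
  rw [show (qnorm W)⁻¹ * (qnorm W ^ 2 * (qnorm W)⁻¹) = 1 by field_simp, coe_one]

end qsmul

def TraceOrthonormalOn {n m : ℕ} {ι : Type*} [DecidableEq ι]
    (V : ι → Matrix (Fin n) (Fin m) ℍ[ℝ]) (s : Finset ι) : Prop :=
  ∀ i ∈ s, ∀ j ∈ s, trace ((V i)ᴴ * V j) = if i = j then 1 else 0

namespace TraceOrthonormalOn

variable {n m : ℕ} {ι : Type*} [DecidableEq ι] {V : ι → Matrix (Fin n) (Fin m) ℍ[ℝ]}
  {s : Finset ι}

lemma trace_conjTranspose_mul_sum_qsmul (hV : TraceOrthonormalOn V s) (c : ι → ℍ[ℝ])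
    {i : ι} (hi : i ∈ s) : trace ((V i)ᴴ * ∑ l ∈ s, qsmul (V l) (c l)) = c i := by
  rw [Matrix.mul_sum, trace_sum, Finset.sum_eq_single_of_mem i hi]
  · rw [trace_conjTranspose_mul_qsmul, hV i hi i hi, if_pos rfl, one_mul]
  · intro l hl hli
    rw [trace_conjTranspose_mul_qsmul, hV i hi l hl, if_neg (Ne.symm hli), zero_mul]

lemma trace_conjTranspose_mul_sub_projection (hV : TraceOrthonormalOn V s)
    (Z : Matrix (Fin n) (Fin m) ℍ[ℝ]) {i : ι} (hi : i ∈ s) :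
    trace ((V i)ᴴ * (Z - ∑ l ∈ s, qsmul (V l) (trace ((V l)ᴴ * Z)))) = 0 := by
  rw [Matrix.mul_sub, trace_sub, hV.trace_conjTranspose_mul_sum_qsmul _ hi, sub_self]

lemma insert {a : ι} (hV : TraceOrthonormalOn V s) (ha : a ∉ s)
    (hnorm : trace ((V a)ᴴ * V a) = 1) (horth : ∀ i ∈ s, trace ((V i)ᴴ * V a) = 0) :
    TraceOrthonormalOn V (insert a s) := by
  have horth' : ∀ i ∈ s, trace ((V a)ᴴ * V i) = 0 := fun i hi => by
    rw [trace_conjTranspose_mul_comm, horth i hi, star_zero]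
  intro i hi j hj
  rcases Finset.mem_insert.mp hi with rfl | his <;>
    rcases Finset.mem_insert.mp hj with rfl | hjs
  · rw [hnorm, if_pos rfl]
  · rw [horth' j hjs, if_neg (ne_of_mem_of_not_mem hjs ha).symm]
  · rw [horth i his, if_neg (ne_of_mem_of_not_mem his ha)]
  · exact hV i his j hjs

end TraceOrthonormalOn

namespace ArnoldiData

variable {n m k : ℕ} {A : Matrix (Fin n) (Fin n) ℍ[ℝ]} {V : ℕ → Matrix (Fin n) (Fin m) ℍ[ℝ]}
  {h : ℕ → ℕ → ℍ[ℝ]}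

lemma residual_eq_sub_projection (hA : ArnoldiData n m k A V h) {j : ℕ}
    (hj : j ∈ Finset.Icc 1 k) :
    A * V j - ∑ i ∈ Finset.Icc 1 j, qsmul (V i) (h i j)
      = A * V j - ∑ i ∈ Finset.Icc 1 j, qsmul (V i) (trace ((V i)ᴴ * (A * V j))) := by
  congr 1
  exact Finset.sum_congr rfl fun i hi => by rw [hA.hdef j hj i hi]

lemma traceOrthonormalOn_Icc (hA : ArnoldiData n m k A V h) :
    ∀ p ≤ k, TraceOrthonormalOn V (Finset.Icc 1 (p + 1)) := by
  intro p
  induction p with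
  | zero =>
    intro _ i hi j hj
    obtain rfl : i = 1 := by simpa using hi
    obtain rfl : j = 1 := by simpa using hj
    rw [trace_conjTranspose_mul_self, hA.normV1, if_pos rfl]
    norm_num
  | succ p ih =>
    intro hpk
    have hV := ih (by omega)
    have hj : p + 1 ∈ Finset.Icc 1 k := Finset.mem_Icc.mpr ⟨by omega, hpk⟩
    have hnext := hA.vdef _ hj
    rw [← Finset.insert_Icc_right_eq_Icc_add_one (by omega)]
    refine hV.insert (by simp) ?_ fun i hi => ?_
    · rw [hnext]
      exact trace_normalize_conjTranspose_mul_self _ (hA.hsub _ hj) (hA.hsub_ne _ hj)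
    · rw [hnext, trace_conjTranspose_mul_qsmul, hA.residual_eq_sub_projection hj,
        hV.trace_conjTranspose_mul_sub_projection _ hi, zero_mul]

lemma mul_eq_sum_qsmul (hA : ArnoldiData n m k A V h) {j : ℕ} (hj : j ∈ Finset.Icc 1 k) :
    A * V j = ∑ i ∈ Finset.Icc 1 (j + 1), qsmul (V i) (h i j) := by
  rw [Finset.sum_Icc_succ_top (by omega), hA.vdef j hj,
    qsmul_mul_inv_cancel _ (hA.hsub_ne j hj)]
  abel

lemma trace_conjTranspose_mul_mul_eq (hA : ArnoldiData n m k A V h)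
    (hzero : ∀ i j : ℕ, j + 1 < i → h i j = 0) {i j : ℕ} (hi : i ∈ Finset.Icc 1 (k + 1))
    (hj : j ∈ Finset.Icc 1 k) : trace ((V i)ᴴ * (A * V j)) = h i j := by
  have hjk : j + 1 ≤ k + 1 := by simp only [Finset.mem_Icc] at hj; omega
  have hsub : Finset.Icc 1 (j + 1) ⊆ Finset.Icc 1 (k + 1) := Finset.Icc_subset_Icc le_rfl hjk
  have hAV : A * V j = ∑ l ∈ Finset.Icc 1 (k + 1), qsmul (V l) (h l j) := by
    rw [hA.mul_eq_sum_qsmul hj]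
    refine Finset.sum_subset hsub fun l hl hl' => ?_
    rw [hzero l j (by simp only [Finset.mem_Icc] at hl hl'; omega)]
    funext a b
    simp [qsmul]
  rw [hAV, (hA.traceOrthonormalOn_Icc k le_rfl).trace_conjTranspose_mul_sum_qsmul _ hi]

end ArnoldiData

theorem glqfom_galerkin_condition_general (n m k : ℕ)
    (A : Matrix (Fin n) (Fin n) ℍ[ℝ])
    (R₀ : Matrix (Fin n) (Fin m) ℍ[ℝ])
    (β : ℝ) (hβpos : 0 < β)
    (V : ℕ → Matrix (Fin n) (Fin m) ℍ[ℝ]) (hV1 : V 1 = qsmul R₀ ((β : ℍ[ℝ])⁻¹))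
    (h : ℕ → ℕ → ℍ[ℝ]) (hA : ArnoldiData n m k A V h)
    (hzero : ∀ i j : ℕ, j + 1 < i → h i j = 0) :
    ∀ y : ℕ → ℍ[ℝ],
      (∀ i ∈ Finset.Icc 1 k,
        Matrix.trace ((V i)ᴴ *
          (R₀ - A * ∑ j ∈ Finset.Icc 1 k, qsmul (V j) (y j))) = 0) ↔
      (∀ i ∈ Finset.Icc 1 k,
        ∑ j ∈ Finset.Icc 1 k, h i j * y j = if i = 1 then (β : ℍ[ℝ]) else 0) := by
  intro y
  have hV := hA.traceOrthonormalOn_Icc k le_rfl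
  have hR₀ : R₀ = qsmul (V 1) (β : ℍ[ℝ]) := by
    rw [hV1, qsmul_mul_inv_cancel _ (coe_inj.not.mpr hβpos.ne')]
  have hresidual : ∀ i ∈ Finset.Icc 1 k,
      trace ((V i)ᴴ * (R₀ - A * ∑ j ∈ Finset.Icc 1 k, qsmul (V j) (y j)))
        = (if i = 1 then (β : ℍ[ℝ]) else 0) - ∑ j ∈ Finset.Icc 1 k, h i j * y j := by
    intro i hi
    have hi' : i ∈ Finset.Icc 1 (k + 1) := by simp at hi ⊢; omega
    rw [Matrix.mul_sub, trace_sub, hR₀, trace_conjTranspose_mul_qsmul,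
      hV i hi' 1 (by simp), Matrix.mul_sum, Matrix.mul_sum, trace_sum]
    congr 1
    · split_ifs <;> simp
    · refine Finset.sum_congr rfl fun j hj => ?_
      rw [mul_qsmul, trace_conjTranspose_mul_qsmul,
        hA.trace_conjTranspose_mul_mul_eq hzero hi' hj]
  refine forall₂_congr fun i hi => ?_
  rw [hresidual i hi, sub_eq_zero, eq_comm]

/-- Galerkin condition for Gl-QFOM: with `R₀ = B − A X₀`, `β = ‖R₀‖ > 0`,
`V₁ = R₀ β⁻¹`, the Arnoldi hypotheses through step `k` and `h i j = 0` for `i > j+1`,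
for every `y ∈ ℍ^k` the Galerkin condition
`tr(V_i^* (R₀ − A Σ_{j=1}^k V_j y_j)) = 0` (`i = 1, …, k`) is equivalent to
`H_k y = β e₁`, i.e. `Σ_{j=1}^k h_{i,j} y_j = β δ_{i1}` for `i = 1, …, k`. -/
theorem glqfom_galerkin_condition (n m k : ℕ)
    (A : Matrix (Fin n) (Fin n) ℍ[ℝ]) (B X₀ : Matrix (Fin n) (Fin m) ℍ[ℝ])
    (R₀ : Matrix (Fin n) (Fin m) ℍ[ℝ]) (hR₀ : R₀ = B - A * X₀)
    (β : ℝ) (hβ : β = qnorm R₀) (hβpos : 0 < β)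
    (V : ℕ → Matrix (Fin n) (Fin m) ℍ[ℝ]) (hV1 : V 1 = qsmul R₀ ((β : ℍ[ℝ])⁻¹))
    (h : ℕ → ℕ → ℍ[ℝ]) (hA : ArnoldiData n m k A V h)
    (hzero : ∀ i j : ℕ, j + 1 < i → h i j = 0) :
    ∀ y : ℕ → ℍ[ℝ],
      (∀ i ∈ Finset.Icc 1 k,
        Matrix.trace ((V i)ᴴ *
          (R₀ - A * ∑ j ∈ Finset.Icc 1 k, qsmul (V j) (y j))) = 0) ↔
      (∀ i ∈ Finset.Icc 1 k,
        ∑ j ∈ Finset.Icc 1 k, h i j * y j = if i = 1 then (β : ℍ[ℝ]) else 0) :=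
  glqfom_galerkin_condition_general n m k A R₀ β hβpos V hV1 h hA hzero
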